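/- Let m ≥ 1 be an odd integer and n ≥ 1 an integer. Then the sum, over all tuples (k₁, …, k_m) of nonnegative integers with k₁ + ⋯ + k_m = n, of the product C(2k₁,k₁) ⋯ C(2k_m,k_m), equals C(2n + m − 1, 2n) · C(2n, n) / C(n + (m−1)/2, n). -/

import Mathlib

open Finset PowerSeries

noncomputable def cb (k : ℕ) : ℝ := ((2 * k).choose k : ℝ)

lemma cb_rec (k : ℕ) : ((k : ℝ) + 1) * cb (k + 1) = (4 * k + 2) * cb k := by
  have h := Nat.succ_mul_centralBinom_succ k
  simp only [Nat.centralBinom] at h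
  have h' := congrArg (fun x : ℕ => (x : ℝ)) h
  push_cast at h'
  unfold cb
  push_cast
  convert h' using 2 <;> ring_nf

lemma cb_nonneg (k : ℕ) : 0 ≤ cb k := by unfold cb; positivity

lemma half_sum (n : ℕ) :
    2 * ∑ i ∈ range (n + 1), (i : ℝ) * cb i * cb (n - i)
      = (n : ℝ) * ∑ i ∈ range (n + 1), cb i * cb (n - i) := by
  have hrefl := Finset.sum_range_reflect (fun i => (i : ℝ) * cb i * cb (n - i)) (n + 1)
  simp only [Nat.add_sub_cancel] at hrefl
  have hcongr : ∑ j ∈ range (n + 1), ((n - j : ℕ) : ℝ) * cb (n - j) * cb (n - (n - j))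
      = ∑ j ∈ range (n + 1), ((n : ℝ) - (j : ℝ)) * cb j * cb (n - j) := by
    apply Finset.sum_congr rfl
    intro j hj
    have hjn : j ≤ n := by simpa [Nat.lt_succ_iff] using hj
    rw [Nat.sub_sub_self hjn, Nat.cast_sub hjn]
    ring
  rw [two_mul]
  nth_rewrite 1 [← hrefl]
  rw [hcongr, ← Finset.sum_add_distrib, Finset.mul_sum]
  apply Finset.sum_congr rfl
  intro j hj
  ring

lemma conv_cb (n : ℕ) : ∑ i ∈ range (n + 1), cb i * cb (n - i) = 4 ^ n := by
  induction n with
  | zero => simp [cb]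
  | succ n ih =>
    -- T = ∑_{i<n+2} i * cb i * cb (n+1-i)
    set T : ℝ := ∑ i ∈ range (n + 2), (i : ℝ) * cb i * cb (n + 1 - i) with hT
    have h2T : 2 * T = ((n : ℝ) + 1) * ∑ i ∈ range (n + 2), cb i * cb (n + 1 - i) := by
      have := half_sum (n + 1)
      push_cast at this ⊢
      simpa using this
    have hshift : T = ∑ j ∈ range (n + 1), ((j : ℝ) + 1) * cb (j + 1) * cb (n - j) := by
      rw [hT, Finset.sum_range_succ' (fun i => (i : ℝ) * cb i * cb (n + 1 - i)) (n + 1)]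
      simp [Nat.succ_sub_succ]
    have hshift2 : T = 4 * ∑ j ∈ range (n + 1), (j : ℝ) * cb j * cb (n - j)
        + 2 * ∑ j ∈ range (n + 1), cb j * cb (n - j) := by
      rw [hshift]
      rw [Finset.mul_sum, Finset.mul_sum, ← Finset.sum_add_distrib]
      apply Finset.sum_congr rfl
      intro j hj
      have := cb_rec j
      linear_combination this * cb (n - j)
    have hhalf := half_sum n
    have : 2 * T = (4 * (n : ℝ) + 4) * ∑ j ∈ range (n + 1), cb j * cb (n - j) := by
      rw [hshift2]; nlinarith [hhalf]
    rw [ih] at this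
    rw [h2T] at this
    have hne : ((n : ℝ) + 1) ≠ 0 := by positivity
    have hS : ∑ i ∈ range (n + 2), cb i * cb (n + 1 - i) = 4 * 4 ^ n := by
      apply mul_left_cancel₀ hne
      rw [this]; ring
    show ∑ i ∈ range (n + 2), cb i * cb (n + 1 - i) = 4 ^ (n + 1)
    rw [hS]; ring

noncomputable def Oj (j n : ℕ) : ℝ :=
  ((2 * n + 2 * j).factorial : ℝ) * (j.factorial : ℝ) /
    (((2 * j).factorial : ℝ) * (n.factorial : ℝ) * ((n + j).factorial : ℝ))

lemma fact_pos (k : ℕ) : (0 : ℝ) < (k.factorial : ℝ) := by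
  exact_mod_cast k.factorial_pos

lemma Oj_zero (j : ℕ) : Oj j 0 = 1 := by
  unfold Oj
  simp only [Nat.mul_zero, Nat.zero_add, Nat.factorial_zero, Nat.zero_add, zero_add, mul_zero]
  rw [div_eq_one_iff_eq]
  · push_cast; ring
  · positivity

lemma Oj_step (j n : ℕ) : Oj (j + 1) (n + 1) = 4 * Oj (j + 1) n + Oj j (n + 1) := by
  unfold Oj
  have e1 : 2 * (n + 1) + 2 * (j + 1) = (2 * n + 2 * j) + 4 := by ring
  have e2 : 2 * n + 2 * (j + 1) = (2 * n + 2 * j) + 2 := by ring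
  have e3 : 2 * (n + 1) + 2 * j = (2 * n + 2 * j) + 2 := by ring
  have e4 : 2 * (j + 1) = (2 * j) + 2 := by ring
  have e5 : n + 1 + (j + 1) = (n + j) + 2 := by ring
  have e6 : n + (j + 1) = (n + j) + 1 := by ring
  have e7 : n + 1 + j = (n + j) + 1 := by ring
  rw [e1, e2, e3, e4, e5, e6, e7]
  have f4 : ∀ a : ℕ, ((a + 4).factorial : ℝ)
      = ((a : ℝ) + 4) * ((a : ℝ) + 3) * ((a : ℝ) + 2) * ((a : ℝ) + 1) * (a.factorial : ℝ) := by
    intro a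
    rw [show a + 4 = (a + 3) + 1 by ring, Nat.factorial_succ,
      show a + 3 = (a + 2) + 1 by ring, Nat.factorial_succ,
      show a + 2 = (a + 1) + 1 by ring, Nat.factorial_succ, Nat.factorial_succ]
    push_cast; ring
  have f2 : ∀ a : ℕ, ((a + 2).factorial : ℝ)
      = ((a : ℝ) + 2) * ((a : ℝ) + 1) * (a.factorial : ℝ) := by
    intro a
    rw [show a + 2 = (a + 1) + 1 by ring, Nat.factorial_succ, Nat.factorial_succ]
    push_cast; ring
  have f1 : ∀ a : ℕ, ((a + 1).factorial : ℝ) = ((a : ℝ) + 1) * (a.factorial : ℝ) := by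
    intro a; rw [Nat.factorial_succ]; push_cast; ring
  simp only [f4, f2, f1]
  have h1 := fact_pos (2 * n + 2 * j)
  have h2 := fact_pos j
  have h3 := fact_pos (2 * j)
  have h4 := fact_pos n
  have h5 := fact_pos (n + j)
  field_simp
  push_cast
  ring

lemma Oj_geom (j n : ℕ) : ∑ b ∈ range (n + 1), (4 : ℝ) ^ (n - b) * Oj j b = Oj (j + 1) n := by
  induction n with
  | zero => simp [Oj_zero]
  | succ n ih =>
    rw [Finset.sum_range_succ, Nat.sub_self, pow_zero, one_mul, Oj_step]
    congr 1
    rw [← ih, Finset.mul_sum]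
    apply Finset.sum_congr rfl
    intro b hb
    have hbn : b ≤ n := by simpa [Nat.lt_succ_iff] using hb
    rw [show n + 1 - b = (n - b) + 1 by omega, pow_succ]
    ring

noncomputable def F : PowerSeries ℝ := PowerSeries.mk cb
noncomputable def H : PowerSeries ℝ := PowerSeries.mk fun d => (4 : ℝ) ^ d

lemma FF : F * F = H := by
  ext n
  rw [PowerSeries.coeff_mul]
  simp only [F, H, PowerSeries.coeff_mk]
  rw [Finset.Nat.sum_antidiagonal_eq_sum_range_succ_mk]
  exact conv_cb n

lemma HO (j : ℕ) : H * PowerSeries.mk (Oj j) = PowerSeries.mk (Oj (j + 1)) := by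
  ext n
  rw [PowerSeries.coeff_mul]
  simp only [H, PowerSeries.coeff_mk]
  rw [Finset.Nat.sum_antidiagonal_eq_sum_range_succ_mk]
  rw [← Oj_geom j n]
  have := Finset.sum_range_reflect (fun i => (4 : ℝ) ^ (n - i) * Oj j i) (n + 1)
  simp only [Nat.add_sub_cancel] at this
  rw [← this]
  apply Finset.sum_congr rfl
  intro i hi
  have hin : i ≤ n := by simpa [Nat.lt_succ_iff] using hi
  rw [Nat.sub_sub_self hin]

lemma Oj_zero_fun : PowerSeries.mk (Oj 0) = F := by
  ext k
  simp only [F, PowerSeries.coeff_mk]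
  unfold Oj cb
  rw [Nat.cast_choose ℝ (show k ≤ 2 * k by omega)]
  rw [show 2 * k - k = k by omega]
  simp [Nat.factorial_zero, mul_comm]

lemma F_pow_odd (j : ℕ) : F ^ (2 * j + 1) = PowerSeries.mk (Oj j) := by
  induction j with
  | zero => simpa using Oj_zero_fun.symm
  | succ j ih =>
    have : F ^ (2 * (j + 1) + 1) = (F * F) * F ^ (2 * j + 1) := by ring
    rw [this, FF, ih, HO]

lemma tuple_succ (f : ℕ → ℝ) (k n : ℕ) :
    ∑ x ∈ Finset.Nat.antidiagonalTuple (k + 1) n, ∏ i, f (x i)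
      = ∑ p ∈ Finset.HasAntidiagonal.antidiagonal n,
          f p.1 * ∑ x ∈ Finset.Nat.antidiagonalTuple k p.2, ∏ i, f (x i) := by
  simp_rw [Finset.mul_sum]
  rw [Finset.sum_sigma' (Finset.HasAntidiagonal.antidiagonal n)
    (fun p => Finset.Nat.antidiagonalTuple k p.2)
    (fun p x => f p.1 * ∏ i, f (x i))]
  symm
  refine Finset.sum_nbij'
    (fun q => Fin.cons q.1.1 q.2)
    (fun x => ⟨(x 0, ∑ i : Fin k, x (Fin.succ i)), fun i => x (Fin.succ i)⟩)
    ?_ ?_ ?_ ?_ ?_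
  · rintro ⟨⟨a, b⟩, x⟩ hq
    simp only [Finset.mem_sigma, Finset.HasAntidiagonal.mem_antidiagonal,
      Finset.Nat.mem_antidiagonalTuple] at hq
    rw [Finset.Nat.mem_antidiagonalTuple, Fin.sum_univ_succ]
    simp only [Fin.cons_zero, Fin.cons_succ]
    rw [hq.2]
    exact hq.1
  · intro x hx
    rw [Finset.Nat.mem_antidiagonalTuple] at hx
    simp only [Finset.mem_sigma, Finset.HasAntidiagonal.mem_antidiagonal,
      Finset.Nat.mem_antidiagonalTuple]
    constructor
    · rw [← hx, Fin.sum_univ_succ]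
    · trivial
  · rintro ⟨⟨a, b⟩, x⟩ hq
    simp only [Finset.mem_sigma, Finset.mem_antidiagonal,
      Finset.Nat.mem_antidiagonalTuple] at hq
    refine Sigma.ext ?_ ?_
    · simp [hq.2]
    · simp
  · intro x hx
    simp only [Fin.cons_zero, Fin.cons_succ]
    exact Fin.cons_self_tail x
  · rintro ⟨⟨a, b⟩, x⟩ hq
    rw [Fin.prod_univ_succ]
    simp [Fin.cons_zero, Fin.cons_succ]

lemma tuple_coeff (m n : ℕ) :
    ∑ x ∈ Finset.Nat.antidiagonalTuple m n, ∏ i, cb (x i)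
      = PowerSeries.coeff n (F ^ m) := by
  induction m generalizing n with
  | zero =>
    rw [pow_zero]
    cases n with
    | zero => simp [Finset.Nat.antidiagonalTuple_zero_zero]
    | succ n => simp [Finset.Nat.antidiagonalTuple_zero_succ]
  | succ m ih =>
    rw [pow_succ']
    rw [PowerSeries.coeff_mul, tuple_succ]
    apply Finset.sum_congr rfl
    intro p hp
    rw [ih p.2]
    simp only [F, PowerSeries.coeff_mk]

lemma Oj_eq_choose (j n : ℕ) :
    Oj j n = ((2 * n + 2 * j).choose (2 * n) : ℝ) * ((2 * n).choose n : ℝ) /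
      ((n + j).choose n : ℝ) := by
  rw [Nat.cast_choose ℝ (show 2 * n ≤ 2 * n + 2 * j by omega),
    Nat.cast_choose ℝ (show n ≤ 2 * n by omega),
    Nat.cast_choose ℝ (show n ≤ n + j by omega),
    show 2 * n + 2 * j - 2 * n = 2 * j by omega,
    show 2 * n - n = n by omega,
    show n + j - n = j by omega]
  unfold Oj
  have h1 := fact_pos (2 * n + 2 * j)
  have h2 := fact_pos j
  have h3 := fact_pos (2 * j)
  have h4 := fact_pos n
  have h5 := fact_pos (n + j)
  have h6 := fact_pos (2 * n)
  field_simp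

theorem sum_central_binomial_products_odd (m n : ℕ) (hm : 1 ≤ m) (hmo : Odd m)
    (hn : 1 ≤ n) :
    ∑ k ∈ Finset.Nat.antidiagonalTuple m n,
      ∏ i, ((2 * k i).choose (k i) : ℝ) =
      ((2 * n + m - 1).choose (2 * n) : ℝ) * ((2 * n).choose n : ℝ) /
        ((n + (m - 1) / 2).choose n : ℝ) := by
  obtain ⟨j, rfl⟩ := hmo
  have h1 : ∑ k ∈ Finset.Nat.antidiagonalTuple (2 * j + 1) n,
      ∏ i, ((2 * k i).choose (k i) : ℝ) = Oj j n := by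
    have h := tuple_coeff (2 * j + 1) n
    rw [F_pow_odd, PowerSeries.coeff_mk] at h
    simpa [cb] using h
  rw [h1, show 2 * n + (2 * j + 1) - 1 = 2 * n + 2 * j by omega,
    show (2 * j + 1 - 1) / 2 = j by omega]
  exact Oj_eq_choose j n
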